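/- arXiv:1601.06396 — 4 statements merged into one kernel-verified Lean document; each statement's English description precedes it below -/
import Mathlib

section
/- Let I ∈ J and let 𝒳 ⊂ ℓ₂^{BL}(I) be a set bounded in ℓ₂. Then for every ε > 0 there exists a real-valued sequence k̂ ∈ ℓ₂({1,2,3,...}) such that for every x ∈ 𝒳 and every t ∈ ℤ the series x̂(t) = e^{iω_I t} ∑_{s ≤ t−1} k̂(t−s) e^{−iω_I s} x(s) converges absolutely and |x(t) − x̂(t)| ≤ ε. -/
/-!
On the arc `I`, the constant `1` is a uniform limit of real polynomials in `z = e^{-i(ω - ω_I)}`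
without constant term: by Runge's pole-pushing argument, `z⁻¹` is a uniform limit of real
polynomials in `z` on any arc avoiding `-1`, since `(z + r)⁻¹` is one for `r ≥ 2` (a geometric
series) and stays one as `r` decreases to `0` in steps shorter than the distance from `-r` to the
arc. If `1 - z p(z)` is at most `δ` on the arc, the coefficients of `p` form a finite kernel for
which `x(t) - x̂(t)` is the inverse Z-transform of `(1 - z p(z)) X`, hence at most
`δ ‖X‖₁ / 2π`, and `‖X‖₁` is bounded on `𝒳` by Parseval.
-/

open MeasureTheory Complex Real Set Filter

noncomputable section

/-- Two-sided square-summable sequences: membership in `ℓ₂`. -/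
def MemL2 (x : ℤ → ℂ) : Prop := Summable fun t => ‖x t‖ ^ 2

/-- Absolutely summable sequences: membership in `ℓ₁(ℤ)`. -/
def MemL1 (x : ℤ → ℂ) : Prop := Summable fun t => ‖x t‖

/-- Inverse Z-transform of a function on `(−π, π]`:
`x(t) = (1/2π) ∫_{−π}^{π} X(e^{iω}) e^{iωt} dω`. -/
def invZ (X : ℝ → ℂ) (t : ℤ) : ℂ :=
  ((1 / (2 * π) : ℝ) : ℂ) *
    ∫ ω in Set.Ioc (-π) π, X ω * Complex.exp (Complex.I * (ω : ℂ) * (t : ℂ))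

/-- `x ∈ ℓ₂^{BL}(S)`: `x` is square-summable and its Z-transform vanishes a.e. outside `S`,
expressed by saying that `x` is the inverse Z-transform of some `X ∈ L²` of the circle
vanishing a.e. outside `S`. -/
def BandLimited (S : Set ℝ) (x : ℤ → ℂ) : Prop :=
  MemL2 x ∧ ∃ X : ℝ → ℂ,
    MemLp X 2 (volume.restrict (Set.Ioc (-π) π)) ∧
    (∀ᵐ ω ∂volume.restrict (Set.Ioc (-π) π), ω ∉ S → X ω = 0) ∧
    ∀ t : ℤ, x t = invZ X t

/-- An element of the class `J`: a proper connected arc of the circle, recorded via the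
angle `mid` of its middle point and its half-length `halfLen` (so `mes(I) = 2·halfLen`);
`halfLen < π` makes the complementary set nonempty. -/
structure Arc where
  mid : ℝ
  halfLen : ℝ
  mid_mem : mid ∈ Set.Ioc (-π) π
  halfLen_pos : 0 < halfLen
  halfLen_lt : halfLen < π

/-- The subset of `(−π, π]` corresponding to the arc `{e^{iω} : |ω − mid| < halfLen (mod 2π)}`. -/
def Arc.set (I : Arc) : Set ℝ :=
  {ω | ω ∈ Set.Ioc (-π) π ∧ ∃ k : ℤ, |ω - I.mid + 2 * π * (k : ℝ)| < I.halfLen}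

/-- One-sided sequences, defined on `{t ∈ ℤ : t ≤ 0}`. -/
abbrev NegSeq := {t : ℤ // t ≤ 0} → ℂ

/-- Membership in `ℓ₂⁻`. -/
def MemL2Neg (x : NegSeq) : Prop := Summable fun t => ‖x t‖ ^ 2

/-- `x ∈ ℓ₂^{−,LBL}(S)`: `x` is the trace on `{t ≤ 0}` of a band-limited sequence with
spectrum in `S`. -/
def LBL (S : Set ℝ) (x : NegSeq) : Prop :=
  ∃ xBL : ℤ → ℂ, BandLimited S xBL ∧ ∀ t : {t : ℤ // t ≤ 0}, x t = xBL t.1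

/-- `p` is the optimal approximation of `x` in `ℓ₂^{−,LBL}(S)`, i.e. a minimizer of
`∑_{t≤0} |p(t) − x(t)|²` over `ℓ₂^{−,LBL}(S)`. -/
def IsOptApprox (S : Set ℝ) (x p : NegSeq) : Prop :=
  LBL S p ∧ ∀ z : NegSeq, LBL S z →
    (∑' t, ‖p t - x t‖ ^ 2) ≤ ∑' t, ‖z t - x t‖ ^ 2

/-- `sinc(u) = sin(u)/u` (with value `1` at `u = 0`). -/
def sinc (u : ℝ) : ℝ := if u = 0 then 1 else Real.sin u / u

theorem tsum_geometric_mem {𝔸 σ : Type*} [NormedRing 𝔸] [CompleteSpace 𝔸] [SetLike σ 𝔸]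
    [SubsemiringClass σ 𝔸] {S : σ} (hS : IsClosed (S : Set 𝔸)) {g : 𝔸} (hg : g ∈ S)
    (h : ‖g‖ < 1) : ∑' n, g ^ n ∈ S :=
  hS.mem_of_tendsto (summable_geometric_of_norm_lt_one h).hasSum.tendsto_sum_nat
    (Eventually.of_forall fun _ => sum_mem fun i _ => pow_mem hg i)

theorem exists_mem_mul_sub_eq_one {𝔸 σ : Type*} [NormedCommRing 𝔸] [CompleteSpace 𝔸]
    [SetLike σ 𝔸] [SubringClass σ 𝔸] {S : σ} (hS : IsClosed (S : Set 𝔸)) {u w a : 𝔸}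
    (hu : u ∈ S) (ha : a ∈ S) (huw : u * w = 1) (h : ‖a‖ * ‖u‖ < 1) :
    ∃ v ∈ S, v * (w - a) = 1 := by
  have hau : ‖a * u‖ < 1 := (norm_mul_le a u).trans_lt h
  refine ⟨u * ∑' n, (a * u) ^ n, mul_mem hu (tsum_geometric_mem hS (mul_mem ha hu) hau), ?_⟩
  linear_combination (∑' n, (a * u) ^ n) * huw + geom_series_mul_neg (a * u) hau

section PolePushing

variable {K : Type*} [TopologicalSpace K] [CompactSpace K]

theorem ContinuousMap.norm_le_inv_of_mul_eq_one {u w : C(K, ℂ)} (h : u * w = 1) {d : ℝ}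
    (hd : 0 < d) (hw : ∀ x, d ≤ ‖w x‖) : ‖u‖ ≤ d⁻¹ := by
  refine (ContinuousMap.norm_le _ (by positivity)).2 fun x => ?_
  have hx : u x * w x = 1 := by simpa using congr($h x)
  rw [eq_inv_of_mul_eq_one_left hx, norm_inv]
  exact inv_anti₀ hd (hw x)

theorem ContinuousMap.norm_algebraMap_le (r : ℝ) : ‖algebraMap ℝ C(K, ℂ) r‖ ≤ |r| :=
  (ContinuousMap.norm_le _ (abs_nonneg r)).2 fun x => by simp

theorem exists_mem_elemental_mul_eq_one (ζ : C(K, ℂ)) {d : ℝ} (hd : 0 < d)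
    (hζ : ∀ x, ‖ζ x‖ ≤ 1) (hζr : ∀ x, ∀ r : ℝ, 0 ≤ r → d ≤ ‖ζ x + r‖) :
    ∃ u ∈ Algebra.elemental ℝ ζ, u * ζ = 1 := by
  set S := Algebra.elemental ℝ ζ
  have hS : IsClosed (S : Set C(K, ℂ)) := Algebra.elemental.isClosed ℝ ζ
  let P (r : ℝ) : Prop := ∃ u ∈ S, u * (ζ + algebraMap ℝ C(K, ℂ) r) = 1
  have hζ_norm : ‖ζ‖ ≤ 1 := (ContinuousMap.norm_le _ zero_le_one).2 hζ
  have base (r : ℝ) (hr : 2 ≤ r) : P r := by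
    have hr0 : 0 < r := by linarith
    have hinv : algebraMap ℝ C(K, ℂ) r⁻¹ * algebraMap ℝ C(K, ℂ) r = 1 := by
      rw [← map_mul, inv_mul_cancel₀ hr0.ne', map_one]
    have hsmall : ‖-ζ‖ * ‖algebraMap ℝ C(K, ℂ) r⁻¹‖ < 1 := by
      have := ContinuousMap.norm_algebraMap_le (K := K) r⁻¹
      rw [abs_of_pos (inv_pos.2 hr0)] at this
      rw [norm_neg]
      calc ‖ζ‖ * ‖algebraMap ℝ C(K, ℂ) r⁻¹‖ ≤ 1 * r⁻¹ := by gcongr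
        _ < 1 := by rw [one_mul]; exact inv_lt_one_of_one_lt₀ (by linarith)
    obtain ⟨v, hv, hvw⟩ := exists_mem_mul_sub_eq_one hS (Subalgebra.algebraMap_mem S r⁻¹)
      (neg_mem (Algebra.elemental.self_mem ℝ ζ)) hinv hsmall
    exact ⟨v, hv, by rwa [sub_neg_eq_add, add_comm] at hvw⟩
  have step (r : ℝ) (hr : 0 ≤ r) (h : P (r + d / 2)) : P r := by
    obtain ⟨u, hu, huw⟩ := h
    have hu_norm : ‖u‖ ≤ d⁻¹ := ContinuousMap.norm_le_inv_of_mul_eq_one huw hd fun x => by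
      simpa using hζr x (r + d / 2) (by positivity)
    have hsmall : ‖algebraMap ℝ C(K, ℂ) (d / 2)‖ * ‖u‖ < 1 := by
      have := ContinuousMap.norm_algebraMap_le (K := K) (d / 2)
      rw [abs_of_pos (by positivity)] at this
      calc ‖algebraMap ℝ C(K, ℂ) (d / 2)‖ * ‖u‖ ≤ d / 2 * d⁻¹ := by gcongr
        _ < 1 := by rw [div_mul_eq_mul_div, mul_inv_cancel₀ hd.ne']; norm_num
    obtain ⟨v, hv, hvw⟩ := exists_mem_mul_sub_eq_one hS hu (Subalgebra.algebraMap_mem S _) huw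
      hsmall
    exact ⟨v, hv, by rwa [map_add, add_sub_assoc, add_sub_cancel_right] at hvw⟩
  have pushed (n : ℕ) : ∀ r, 0 ≤ r → 2 ≤ r + n * (d / 2) → P r := by
    induction n with
    | zero => intro r _ hr; exact base r (by simpa using hr)
    | succ n ih =>
      intro r hr h
      exact step r hr (ih _ (by positivity) (by push_cast at h; linarith))
  obtain ⟨n, hn⟩ := exists_nat_ge (2 / (d / 2))
  obtain ⟨u, hu, huw⟩ := pushed n 0 le_rfl (by
    rw [div_le_iff₀ (by positivity)] at hn; linarith)
  exact ⟨u, hu, by simpa using huw⟩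

theorem exists_polynomial_norm_one_sub_mul_aeval_le (ζ : C(K, ℂ)) {d : ℝ} (hd : 0 < d)
    (hζ : ∀ x, ‖ζ x‖ ≤ 1) (hζr : ∀ x, ∀ r : ℝ, 0 ≤ r → d ≤ ‖ζ x + r‖) {δ : ℝ} (hδ : 0 < δ) :
    ∃ p : Polynomial ℝ, ∀ x, ‖1 - ζ x * Polynomial.aeval (ζ x) p‖ ≤ δ := by
  obtain ⟨u, hu, huζ⟩ := exists_mem_elemental_mul_eq_one ζ hd hζ hζr
  obtain ⟨v, hv, huv⟩ := Metric.mem_closure_iff.1 hu δ hδ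
  rw [SetLike.mem_coe, Algebra.adjoin_singleton_eq_range_aeval] at hv
  obtain ⟨p, rfl⟩ := hv
  refine ⟨p, fun x => ?_⟩
  have hx : u x * ζ x = 1 := by simpa using congr($huζ x)
  have heval : Polynomial.aeval (ζ x) p = Polynomial.aeval ζ p x :=
    Polynomial.aeval_algHom_apply (ContinuousMap.evalAlgHom ℝ ℂ x) ζ p
  calc ‖1 - ζ x * Polynomial.aeval (ζ x) p‖ = ‖ζ x‖ * ‖(u - Polynomial.aeval ζ p) x‖ := by
        rw [← norm_mul, ← hx, heval, ContinuousMap.sub_apply]; ring_nf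
    _ ≤ 1 * ‖u - Polynomial.aeval ζ p‖ := by
        gcongr
        · exact hζ x
        · exact ContinuousMap.norm_coe_le_norm _ x
    _ ≤ δ := by rw [one_mul, ← dist_eq_norm]; exact huv.le

end PolePushing

theorem sin_le_norm_exp_add {h θ r : ℝ} (hπ : h < π) (hθ : |θ| ≤ h) (hr : 0 ≤ r) :
    Real.sin h ≤ ‖exp (-I * θ) + r‖ := by
  have hcos : Real.cos h ≤ Real.cos θ := by
    rw [← Real.cos_abs θ]
    exact Real.cos_le_cos_of_nonneg_of_le_pi (abs_nonneg θ) hπ.le hθ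
  have hsq : ‖exp (-I * θ) + r‖ ^ 2 = (Real.cos θ + r) ^ 2 + Real.sin θ ^ 2 := by
    rw [Complex.sq_norm, Complex.normSq_apply]
    simp [Complex.exp_re, Complex.exp_im]
    ring
  refine abs_le_of_sq_le_sq' ?_ (norm_nonneg _) |>.2
  rw [hsq]
  nlinarith [Real.sin_sq_add_cos_sq h, Real.sin_sq_add_cos_sq θ,
    mul_le_mul_of_nonneg_left hcos hr, sq_nonneg (r + Real.cos h)]

theorem exists_polynomial_approx_one_on_arc {h δ : ℝ} (h0 : 0 < h) (hπ : h < π) (hδ : 0 < δ) :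
    ∃ p : Polynomial ℝ, ∀ θ : ℝ, |θ| ≤ h →
      ‖1 - exp (-I * θ) * Polynomial.aeval (exp (-I * θ)) p‖ ≤ δ := by
  let ζ : C(Icc (-h) h, ℂ) := ⟨fun θ => exp (-I * (θ : ℝ)), by fun_prop⟩
  obtain ⟨p, hp⟩ := exists_polynomial_norm_one_sub_mul_aeval_le ζ
    (Real.sin_pos_of_pos_of_lt_pi h0 hπ)
    (fun θ => by simp [ζ, Complex.norm_exp])
    (fun θ r hr => sin_le_norm_exp_add hπ (abs_le.2 θ.2) hr) hδ
  exact ⟨p, fun θ hθ => hp ⟨θ, abs_le.1 hθ⟩⟩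

section InverseZTransform

variable {X Y : ℝ → ℂ}

theorem integrable_invZ_integrand (hX : Integrable X (volume.restrict (Ioc (-π) π))) (t : ℤ) :
    Integrable (fun ω : ℝ => X ω * exp (I * ω * t)) (volume.restrict (Ioc (-π) π)) := by
  simpa only [mul_comm (X _)] using hX.bdd_mul (c := 1)
    (by fun_prop : Continuous fun ω : ℝ => exp (I * ω * t)).aestronglyMeasurable
    (ae_of_all _ fun ω => by simp [Complex.norm_exp])

theorem invZ_sub (hX : Integrable X (volume.restrict (Ioc (-π) π)))
    (hY : Integrable Y (volume.restrict (Ioc (-π) π))) (t : ℤ) :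
    invZ (fun ω => X ω - Y ω) t = invZ X t - invZ Y t := by
  simp only [invZ, sub_mul]
  rw [integral_sub (integrable_invZ_integrand hX t) (integrable_invZ_integrand hY t), mul_sub]

theorem invZ_finset_sum {ι : Type*} (s : Finset ι) {Y : ι → ℝ → ℂ}
    (hY : ∀ i ∈ s, Integrable (Y i) (volume.restrict (Ioc (-π) π))) (t : ℤ) :
    invZ (fun ω => ∑ i ∈ s, Y i ω) t = ∑ i ∈ s, invZ (Y i) t := by
  simp only [invZ, Finset.sum_mul]
  rw [integral_finsetSum s fun i hi => integrable_invZ_integrand (hY i hi) t, Finset.mul_sum]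

theorem norm_invZ_le (X : ℝ → ℂ) (t : ℤ) :
    ‖invZ X t‖ ≤ (2 * π)⁻¹ * ∫ ω in Ioc (-π) π, ‖X ω‖ := by
  rw [invZ, norm_mul, norm_real, Real.norm_of_nonneg (by positivity), one_div]
  gcongr
  calc _ ≤ ∫ ω in Ioc (-π) π, ‖X ω * exp (I * ω * t)‖ := norm_integral_le_integral_norm _
    _ = _ := by simp [Complex.norm_exp]

theorem exp_mul_invZ_shift (X : ℝ → ℂ) (a : ℂ) (μ : ℝ) (n : ℕ) (t : ℤ) :
    exp (I * μ * t) * (a * exp (-I * μ * ((t - 1 - n : ℤ) : ℂ)) * invZ X (t - 1 - n)) =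
      invZ (fun ω : ℝ => a * exp (-I * (ω - μ)) ^ (n + 1) * X ω) t := by
  have key (ω : ℝ) : exp (I * μ * t) * exp (-I * μ * ((t - 1 - n : ℤ) : ℂ)) *
      exp (I * ω * ((t - 1 - n : ℤ) : ℂ)) = exp (-I * (ω - μ)) ^ (n + 1) * exp (I * ω * t) := by
    rw [← Complex.exp_nat_mul, ← Complex.exp_add, ← Complex.exp_add, ← Complex.exp_add]
    congr 1
    push_cast
    ring
  simp only [invZ, ← integral_const_mul]
  refine integral_congr_ae (ae_of_all _ fun ω => ?_)
  linear_combination (((1 / (2 * π) : ℝ) : ℂ) * a * X ω) * key ω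

theorem invZ_sub_predictor (hX : Integrable X (volume.restrict (Ioc (-π) π)))
    (p : Polynomial ℝ) (μ : ℝ) (t : ℤ) :
    invZ X t - exp (I * μ * t) * ∑ n ∈ Finset.range (p.natDegree + 1),
        (p.coeff n : ℂ) * exp (-I * μ * ((t - 1 - n : ℤ) : ℂ)) * invZ X (t - 1 - n) =
      invZ (fun ω : ℝ =>
        (1 - exp (-I * (ω - μ)) * Polynomial.aeval (exp (-I * (ω - μ))) p) * X ω) t := by
  have hterm (n : ℕ) : Integrable
      (fun ω : ℝ => (p.coeff n : ℂ) * exp (-I * (ω - μ)) ^ (n + 1) * X ω)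
      (volume.restrict (Ioc (-π) π)) :=
    hX.bdd_mul (c := ‖(p.coeff n : ℂ)‖) (by fun_prop : Continuous fun ω : ℝ =>
      (p.coeff n : ℂ) * exp (-I * (ω - μ)) ^ (n + 1)).aestronglyMeasurable
      (ae_of_all _ fun ω => by simp [Complex.norm_exp])
  rw [Finset.mul_sum, Finset.sum_congr rfl fun n _ => exp_mul_invZ_shift X _ μ n t,
    ← invZ_finset_sum _ fun n _ => hterm n,
    ← invZ_sub hX (integrable_finsetSum _ fun n _ => hterm n)]
  congr 1
  funext ω
  rw [Polynomial.aeval_eq_sum_range, sub_mul, one_mul, Finset.mul_sum, Finset.sum_mul]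
  congr 1
  refine Finset.sum_congr rfl fun n _ => ?_
  rw [Complex.real_smul]
  ring

theorem invZ_eq_fourierCoeffOn (X : ℝ → ℂ) (t : ℤ) :
    invZ X t = fourierCoeffOn (neg_lt_self pi_pos) X (-t) := by
  rw [fourierCoeffOn_eq_integral, intervalIntegral.integral_of_le (neg_le_self pi_pos.le), invZ,
    sub_neg_eq_add, ← two_mul, Complex.real_smul]
  congr 1
  refine integral_congr_ae (ae_of_all _ fun ω => ?_)
  simp only
  rw [fourier_coe_apply, smul_eq_mul, mul_comm]
  congr 2
  push_cast
  field_simp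

theorem integral_norm_sq_eq_tsum_invZ (hX : MemLp X 2 (volume.restrict (Ioc (-π) π))) :
    ∫ ω in Ioc (-π) π, ‖X ω‖ ^ 2 = 2 * π * ∑' t : ℤ, ‖invZ X t‖ ^ 2 := by
  have hparseval := tsum_sq_fourierCoeffOn (neg_lt_self pi_pos) hX
  rw [← (Equiv.neg ℤ).tsum_eq] at hparseval
  simp only [Equiv.neg_apply, ← invZ_eq_fourierCoeffOn] at hparseval
  rw [hparseval, intervalIntegral.integral_of_le (neg_le_self pi_pos.le), smul_eq_mul,
    sub_neg_eq_add, ← two_mul, mul_inv_cancel_left₀ (by positivity)]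

theorem integral_norm_le_of_tsum_invZ_le (hX : MemLp X 2 (volume.restrict (Ioc (-π) π))) {C : ℝ}
    (hC : ∑' t : ℤ, ‖invZ X t‖ ^ 2 ≤ C) : ∫ ω in Ioc (-π) π, ‖X ω‖ ≤ π * (C + 1) := by
  have hsq := hX.integrable_norm_pow two_ne_zero
  calc ∫ ω in Ioc (-π) π, ‖X ω‖ ≤ ∫ ω in Ioc (-π) π, (‖X ω‖ ^ 2 + 1) / 2 :=
        integral_mono (hX.integrable one_le_two).norm ((hsq.add (integrable_const 1)).div_const 2)
          fun ω => by nlinarith [sq_nonneg (‖X ω‖ - 1)]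
    _ = (2 * π * ∑' t : ℤ, ‖invZ X t‖ ^ 2 + 2 * π) / 2 := by
        rw [integral_div, integral_add hsq (integrable_const 1), integral_norm_sq_eq_tsum_invZ hX]
        simp [measureReal_def, Real.volume_Ioc, pi_pos.le]
        ring
    _ ≤ π * (C + 1) := by nlinarith [pi_pos]

theorem norm_invZ_mul_le (hX : MemLp X 2 (volume.restrict (Ioc (-π) π))) {C δ : ℝ}
    (hC : ∑' t : ℤ, ‖invZ X t‖ ^ 2 ≤ C) (hδ : 0 ≤ δ) {F : ℝ → ℂ}
    (hF : ∀ᵐ ω ∂volume.restrict (Ioc (-π) π), X ω ≠ 0 → ‖F ω‖ ≤ δ) (t : ℤ) :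
    ‖invZ (fun ω => F ω * X ω) t‖ ≤ δ * (C + 1) / 2 := by
  have hFX : ∀ᵐ ω ∂volume.restrict (Ioc (-π) π), ‖F ω * X ω‖ ≤ δ * ‖X ω‖ := by
    filter_upwards [hF] with ω hω
    rw [norm_mul]
    by_cases hXω : X ω = 0
    · simp [hXω]
    · exact mul_le_mul_of_nonneg_right (hω hXω) (norm_nonneg _)
  calc _ ≤ (2 * π)⁻¹ * ∫ ω in Ioc (-π) π, ‖F ω * X ω‖ := norm_invZ_le _ t
    _ ≤ (2 * π)⁻¹ * (δ * ∫ ω in Ioc (-π) π, ‖X ω‖) := by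
        rw [← integral_const_mul δ]
        refine mul_le_mul_of_nonneg_left ?_ (by positivity)
        exact integral_mono_of_nonneg (ae_of_all _ fun _ => norm_nonneg _)
          ((hX.integrable one_le_two).norm.const_mul δ) hFX
    _ ≤ (2 * π)⁻¹ * (δ * (π * (C + 1))) := by
        gcongr
        exact integral_norm_le_of_tsum_invZ_le hX hC
    _ = δ * (C + 1) / 2 := by field_simp

end InverseZTransform

theorem Arc.exists_exp_eq_of_mem_set (I : Arc) {ω : ℝ} (hω : ω ∈ I.set) :
    ∃ θ : ℝ, |θ| ≤ I.halfLen ∧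
      Complex.exp (-Complex.I * (ω - I.mid)) = Complex.exp (-Complex.I * θ) := by
  obtain ⟨-, k, hk⟩ := hω
  refine ⟨ω - I.mid + 2 * π * k, hk.le, Complex.exp_eq_exp_iff_exists_int.2 ⟨k, ?_⟩⟩
  push_cast
  ring

/-- Here `k n` stands for `k̂(n+1)`, and the sum over `s ≤ t−1` is written with `s = t−1−n`. -/
theorem stmt_0 (I : Arc) (𝒳 : Set (ℤ → ℂ))
    (hBL : ∀ x ∈ 𝒳, BandLimited I.set x)
    (C : ℝ) (hbdd : ∀ x ∈ 𝒳, ∑' t : ℤ, ‖x t‖ ^ 2 ≤ C)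
    (ε : ℝ) (hε : 0 < ε) :
    ∃ k : ℕ → ℝ, Summable (fun n => (k n) ^ 2) ∧
      ∀ x ∈ 𝒳, ∀ t : ℤ,
        Summable (fun n : ℕ =>
          ‖((k n : ℝ) : ℂ) * Complex.exp (-Complex.I * (I.mid : ℂ) * ((t - 1 - (n : ℤ) : ℤ) : ℂ))
              * x (t - 1 - (n : ℤ))‖) ∧
        ‖x t - Complex.exp (Complex.I * (I.mid : ℂ) * (t : ℂ)) *
            ∑' n : ℕ, ((k n : ℝ) : ℂ)
              * Complex.exp (-Complex.I * (I.mid : ℂ) * ((t - 1 - (n : ℤ) : ℤ) : ℂ))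
              * x (t - 1 - (n : ℤ))‖ ≤ ε := by
  obtain ⟨p, hp⟩ := exists_polynomial_approx_one_on_arc I.halfLen_pos I.halfLen_lt
    (δ := ε / (|C| + 1)) (by positivity)
  have hcoeff : ∀ n ∉ Finset.range (p.natDegree + 1), p.coeff n = 0 := fun n hn =>
    p.coeff_eq_zero_of_natDegree_lt (by simpa [Nat.lt_succ_iff] using hn)
  refine ⟨p.coeff, summable_of_ne_finset_zero (s := Finset.range (p.natDegree + 1))
    fun n hn => by simp [hcoeff n hn], fun x hx t => ?_⟩
  obtain ⟨-, X, hX, hXsupp, hxX⟩ := hBL x hx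
  have hterm : ∀ n ∉ Finset.range (p.natDegree + 1), ((p.coeff n : ℝ) : ℂ) *
      Complex.exp (-Complex.I * (I.mid : ℂ) * ((t - 1 - (n : ℤ) : ℤ) : ℂ)) *
        x (t - 1 - (n : ℤ)) = 0 := fun n hn => by simp [hcoeff n hn]
  refine ⟨summable_of_ne_finset_zero (s := Finset.range (p.natDegree + 1))
    fun n hn => by rw [hterm n hn, norm_zero], ?_⟩
  have hspectrum : ∀ᵐ ω : ℝ ∂volume.restrict (Ioc (-π) π), X ω ≠ 0 →
      ‖1 - Complex.exp (-Complex.I * ((ω : ℂ) - I.mid)) *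
          Polynomial.aeval (Complex.exp (-Complex.I * ((ω : ℂ) - I.mid))) p‖ ≤ ε / (|C| + 1) := by
    filter_upwards [hXsupp] with ω hω hXω
    obtain ⟨θ, hθ, hexp⟩ := I.exists_exp_eq_of_mem_set (not_not.1 (mt hω hXω))
    rw [hexp]
    exact hp θ hθ
  rw [tsum_eq_sum hterm]
  simp only [hxX]
  rw [invZ_sub_predictor (hX.integrable one_le_two)]
  refine (norm_invZ_mul_le hX (by simpa only [hxX] using hbdd x hx) (by positivity)
    hspectrum t).trans ?_
  rw [div_le_iff₀ two_pos, div_mul_eq_mul_div, div_le_iff₀ (by positivity)]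
  nlinarith [le_abs_self C, abs_nonneg C]
end
end

section
/- Fix ω₀ ∈ (−π,π], σ ≥ 0 and m ∈ ℤ. For every mapping F assigning a complex number to each restriction x|_{ℤ∖{m}} of a sequence x ∈ ℓ₁(ℤ), one has sup_{x ∈ X_σ} |F(x|_{ℤ∖{m}}) − x(m)| ≥ σ. -/
open MeasureTheory Complex Real Set Filter

noncomputable section

/-- The Z-transform of an `ℓ₁` sequence, as a (continuous) function of `ω`:
`X(e^{iω}) = ∑_{t∈ℤ} x(t) e^{−iωt}`. -/
def ZT (x : ℤ → ℂ) (ω : ℝ) : ℂ := ∑' t : ℤ, x t * Complex.exp (-Complex.I * (ω : ℂ) * (t : ℂ))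

/-- The class `X_σ`: sequences `x ∈ ℓ₁(ℤ)` with `min_{ω∈(−π,π]} |X(e^{iω})| = |X(e^{iω₀})| = σ`. -/
def Xsigma (ω₀ σ : ℝ) : Set (ℤ → ℂ) :=
  {x | MemL1 x ∧ (∀ ω ∈ Set.Ioc (-π) π, σ ≤ ‖ZT x ω‖) ∧ ‖ZT x ω₀‖ = σ}

/-!
Test against the sequences `a δ_m` with `|a| = σ`: the Z-transform of `a δ_m` is
`a e^{-iωm}`, of constant modulus `σ`, so each lies in `X_σ`; and all of them have the same
(zero) observations off `m`, so an estimator returns one value `v` for all of them. Of the two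
choices `a = ±σ`, one is at distance at least `σ` from `v`.
-/

theorem exists_norm_eq_le_norm_sub {E : Type*} [SeminormedAddCommGroup E] [NormedSpace ℝ E]
    (v a : E) : ∃ b : E, ‖b‖ = ‖a‖ ∧ ‖a‖ ≤ ‖v - b‖ := by
  by_cases h : ‖a‖ ≤ ‖v - a‖
  · exact ⟨a, rfl, h⟩
  · refine ⟨-a, norm_neg a, ?_⟩
    have hdiff : (2 : ℝ) • a = (v - -a) - (v - a) := by rw [two_smul]; abel
    have htwo : 2 * ‖a‖ ≤ ‖v - -a‖ + ‖v - a‖ := by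
      calc 2 * ‖a‖ = ‖(2 : ℝ) • a‖ := by rw [norm_smul]; norm_num
        _ ≤ ‖v - -a‖ + ‖v - a‖ := hdiff ▸ norm_sub_le _ _
    linarith

theorem ZT_single (m : ℤ) (a : ℂ) (ω : ℝ) :
    ZT (Pi.single m a) ω = a * Complex.exp (-Complex.I * (ω : ℂ) * (m : ℂ)) := by
  unfold ZT
  rw [tsum_eq_single m fun t ht => by simp [Pi.single_eq_of_ne ht]]
  simp

theorem norm_ZT_single (m : ℤ) (a : ℂ) (ω : ℝ) : ‖ZT (Pi.single m a) ω‖ = ‖a‖ := by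
  rw [ZT_single, norm_mul, Complex.norm_exp]
  simp

theorem memL1_single (m : ℤ) (a : ℂ) : MemL1 (Pi.single m a) :=
  summable_of_ne_finset_zero (s := {m}) fun t ht => by
    simp [Pi.single_eq_of_ne (Finset.notMem_singleton.mp ht)]

theorem single_mem_Xsigma (ω₀ σ : ℝ) (m : ℤ) {a : ℂ} (ha : ‖a‖ = σ) :
    Pi.single m a ∈ Xsigma ω₀ σ :=
  ⟨memL1_single m a, fun ω _ => ((norm_ZT_single m a ω).trans ha).ge,
    (norm_ZT_single m a ω₀).trans ha⟩

theorem single_restrict_compl_eq_zero (m : ℤ) (a : ℂ) :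
    (fun t : {t : ℤ // t ≠ m} => (Pi.single m a : ℤ → ℂ) t.1) = 0 :=
  funext fun t => Pi.single_eq_of_ne (M := fun _ => ℂ) t.2 a

theorem stmt_4_general (ω₀ : ℝ) (σ : ℝ) (hσ : 0 ≤ σ) (m : ℤ)
    (F : ({t : ℤ // t ≠ m} → ℂ) → ℂ) :
    ∀ c : ℝ, c < σ → ∃ x ∈ Xsigma ω₀ σ, c < ‖F (fun t => x t.1) - x m‖ := by
  intro c hc
  have hσ_norm : ‖(σ : ℂ)‖ = σ := by simp [abs_of_nonneg hσ]
  obtain ⟨a, ha, hfar⟩ := exists_norm_eq_le_norm_sub (F 0) (σ : ℂ)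
  refine ⟨Pi.single m a, single_mem_Xsigma ω₀ σ m (ha.trans hσ_norm), ?_⟩
  rw [single_restrict_compl_eq_zero, Pi.single_eq_same]
  linarith

/-- for any estimator `F` of the missing value `x(m)` from the observations
`x|_{ℤ∖{m}}`, the worst-case recovery error over `X_σ` is at least `σ`
(i.e. `sup_{x ∈ X_σ} |F(x|_{ℤ∖{m}}) − x(m)| ≥ σ`). -/
theorem stmt_4 (ω₀ : ℝ) (hω₀ : ω₀ ∈ Set.Ioc (-π) π) (σ : ℝ) (hσ : 0 ≤ σ) (m : ℤ)
    (F : ({t : ℤ // t ≠ m} → ℂ) → ℂ) :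
    ∀ c : ℝ, c < σ → ∃ x ∈ Xsigma ω₀ σ, c < ‖F (fun t => x t.1) - x m‖ :=
  stmt_4_general ω₀ σ hσ m F
end
end

section
/- Let Ω ∈ (0,π) and y ∈ ℓ₂(ℤ). Define X̂ ∈ L² of the unit circle by X̂(e^{iω}) = ∑_{k∈ℤ} y_k e^{ikωπ/Ω} for |ω| ≤ Ω and X̂(e^{iω}) = 0 for Ω < |ω| ≤ π. Then the inverse Z-transform x̂ = Z⁻¹X̂ satisfies, for every t ∈ ℤ, x̂(t) = (Ω/π) ∑_{k∈ℤ} y_k sinc(kπ + Ωt), where the series converges absolutely. -/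
open MeasureTheory Complex Real Set Filter

noncomputable section

/-! On `(-Ω, Ω]`, `y` is the sequence of Fourier coefficients of `X` in the basis
`e^{ikωπ/Ω}`, and the kernel `e^{-iωt}` has Fourier coefficients `sinc(kπ + Ωt)`. As `X` vanishes
off `[-Ω, Ω]`, `x̂(t)` is `Ω/π` times the `L²(-Ω, Ω)` pairing of the kernel with `X`, which the
polarized Parseval identity turns into the series; it converges absolutely because both coefficient
sequences are square summable. -/

open ComplexConjugate

theorem summable_norm_mul_of_summable_sq {ι R : Type*} [SeminormedRing R] {u v : ι → R}
    (hu : Summable fun i => ‖u i‖ ^ 2) (hv : Summable fun i => ‖v i‖ ^ 2) :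
    Summable fun i => ‖u i * v i‖ :=
  ((hu.add hv).div_const 2).of_nonneg_of_le (fun _ => norm_nonneg _) fun i =>
    (norm_mul_le _ _).trans (by linarith [two_mul_le_add_sq ‖u i‖ ‖v i‖])

theorem hasSum_prod_fourierCoeff {T : ℝ} [Fact (0 < T)]
    (f g : Lp ℂ 2 (@AddCircle.haarAddCircle T _)) :
    HasSum (fun i => conj (fourierCoeff f i) * fourierCoeff g i)
      (∫ t, conj (f t) * g t ∂AddCircle.haarAddCircle) := by
  simp_rw [mul_comm (conj _)]
  refine HasSum.congr_fun (fourierBasis.hasSum_inner_mul_inner f g) fun n => ?_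
  simp only [← fourierBasis_repr, HilbertBasis.repr_apply_apply, inner_conj_symm,
    mul_comm (inner ℂ f _)]

theorem hasSum_prod_fourierCoeffOn {a b : ℝ} (hab : a < b) {f g : ℝ → ℂ}
    (hf : MemLp f 2 (volume.restrict (Ioc a b))) (hg : MemLp g 2 (volume.restrict (Ioc a b))) :
    HasSum (fun i => conj (fourierCoeffOn hab f i) * fourierCoeffOn hab g i)
      ((b - a)⁻¹ • ∫ x in a..b, conj (f x) * g x) := by
  have := Fact.mk (sub_pos.2 hab)
  rw [← add_sub_cancel a b] at hf hg
  have hf' := hf.memLp_liftIoc.haarAddCircle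
  have hg' := hg.memLp_liftIoc.haarAddCircle
  convert hasSum_prod_fourierCoeff hf'.toLp hg'.toLp using 1
  · simp [fourierCoeff_congr_ae hf'.coeFn_toLp, fourierCoeff_congr_ae hg'.coeFn_toLp,
      fourierCoeff_liftIoc_eq]
  · nth_rw 2 [← add_sub_cancel a b]
    rw [← AddCircle.integral_liftIoc_eq_intervalIntegral, AddCircle.integral_haarAddCircle]
    congr 1
    refine integral_congr_ae ?_
    rw [AddCircle.volume_eq_smul_haarAddCircle]
    filter_upwards [Measure.ae_smul_measure hf'.coeFn_toLp _,
      Measure.ae_smul_measure hg'.coeFn_toLp _] with x hfx hgx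
    rw [hfx, hgx]
    rfl

theorem integral_exp_neg_I_mul_eq_sinc {Ω : ℝ} (hΩ : Ω ≠ 0) (c : ℝ) :
    ∫ x in -Ω..Ω, cexp (-(I * c) * x) = 2 * Ω * _root_.sinc (Ω * c) := by
  by_cases hc : c = 0
  · simp [hc, _root_.sinc, two_mul]
  have hIc : -(I * c) ≠ 0 := by simp [hc]
  rw [integral_exp_mul_complex hIc, _root_.sinc, if_neg (mul_ne_zero hΩ hc)]
  have hΩC : (Ω : ℂ) ≠ 0 := ofReal_ne_zero.2 hΩ
  push_cast
  rw [Complex.sin]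
  field_simp
  simp only [I_sq]
  ring

theorem fourierCoeffOn_exp_neg_I_mul {Ω : ℝ} (hΩ : 0 < Ω) (s : ℝ) (n : ℤ) :
    fourierCoeffOn (neg_lt_self hΩ) (fun x : ℝ => cexp (-(I * x * s))) n
      = _root_.sinc (n * π + Ω * s) := by
  have hfreq : ∀ x : ℝ, fourier (-n) (x : AddCircle (Ω - -Ω)) * cexp (-(I * x * s))
      = cexp (-(I * ↑(n * π / Ω + s)) * x) := by
    intro x
    rw [fourier_coe_apply, ← Complex.exp_add]
    congr 1
    push_cast
    field_simp
    ring
  rw [fourierCoeffOn_eq_integral]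
  simp_rw [smul_eq_mul, hfreq]
  rw [integral_exp_neg_I_mul_eq_sinc hΩ.ne', mul_add, mul_div_cancel₀ _ hΩ.ne',
    Complex.real_smul]
  have hΩC : (Ω : ℂ) ≠ 0 := ofReal_ne_zero.2 hΩ.ne'
  push_cast
  field_simp
  ring

theorem fourierCoeffOn_neg_self_eq_setIntegral {Ω : ℝ} (hΩ : 0 < Ω) (f : ℝ → ℂ) (n : ℤ) :
    fourierCoeffOn (neg_lt_self hΩ) f n = ((1 / (2 * Ω) : ℝ) : ℂ) *
      ∫ ω in Ioc (-Ω) Ω, f ω * cexp (-I * n * ((ω * π / Ω : ℝ) : ℂ)) := by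
  rw [fourierCoeffOn_eq_integral, intervalIntegral.integral_of_le (neg_le_self hΩ.le),
    Complex.real_smul]
  congr 2
  · ring
  funext x
  rw [fourier_coe_apply, smul_eq_mul, mul_comm]
  congr 2
  push_cast
  field_simp
  ring

theorem setIntegral_Ioc_neg_eq_intervalIntegral_of_eq_zero {E : Type*} [NormedAddCommGroup E]
    [NormedSpace ℝ E] {Ω R : ℝ} (hΩ : 0 ≤ Ω) (hΩR : Ω ≤ R) {F : ℝ → E}
    (hF : ∀ ω, Ω < |ω| → F ω = 0) :
    ∫ ω in Ioc (-R) R, F ω = ∫ ω in -Ω..Ω, F ω := by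
  rw [intervalIntegral.integral_of_le (neg_le_self hΩ)]
  refine setIntegral_eq_of_subset_of_ae_sdiff_eq_zero measurableSet_Ioc.nullMeasurableSet
    (Ioc_subset_Ioc (by linarith) hΩR) ?_
  filter_upwards [compl_mem_ae_iff.2 (measure_singleton (μ := volume) (-Ω))] with ω hω hmem
  refine hF ω ?_
  rw [lt_abs]
  by_contra! hin
  exact hmem.2 ⟨lt_of_le_of_ne (by linarith) (Ne.symm hω), hin.1⟩

theorem stmt_16_general (Ω : ℝ) (hΩ : Ω ∈ Set.Ioo 0 π) (y : ℤ → ℂ)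
    (X : ℝ → ℂ)
    (hXLp : MemLp X 2 (volume.restrict (Set.Ioc (-π) π)))
    (hXsupp : ∀ ω : ℝ, Ω < |ω| → X ω = 0)
    (hXcoef : ∀ k : ℤ,
      ((1 / (2 * Ω) : ℝ) : ℂ) *
        ∫ ω in Set.Ioc (-Ω) Ω, X ω * Complex.exp (-Complex.I * (k : ℂ) * ((ω * π / Ω : ℝ) : ℂ))
      = y k) :
    ∀ t : ℤ,
      Summable (fun k : ℤ => ‖y k * ((_root_.sinc ((k : ℝ) * π + Ω * (t : ℝ)) : ℝ) : ℂ)‖) ∧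
      invZ X t = ((Ω / π : ℝ) : ℂ) *
        ∑' k : ℤ, y k * ((_root_.sinc ((k : ℝ) * π + Ω * (t : ℝ)) : ℝ) : ℂ) := by
  intro t
  obtain ⟨hΩ0, hΩπ⟩ := hΩ
  have hab : -Ω < Ω := neg_lt_self hΩ0
  set g : ℝ → ℂ := fun ω => cexp (-(I * ω * (t : ℝ)))
  have hXL2 : MemLp X 2 (volume.restrict (Ioc (-Ω) Ω)) :=
    hXLp.mono_measure (Measure.restrict_mono (Ioc_subset_Ioc (by linarith) hΩπ.le) le_rfl)
  have hgL2 : MemLp g 2 (volume.restrict (Ioc (-Ω) Ω)) :=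
    MemLp.of_bound (by fun_prop : Continuous g).aestronglyMeasurable 1
      (ae_of_all _ fun ω => by simp [g, Complex.norm_exp])
  have hXcoeff : fourierCoeffOn hab X = y :=
    funext fun k => (fourierCoeffOn_neg_self_eq_setIntegral hΩ0 X k).trans (hXcoef k)
  have hgcoeff : fourierCoeffOn hab g
      = fun k : ℤ => ((_root_.sinc ((k : ℝ) * π + Ω * (t : ℝ)) : ℝ) : ℂ) :=
    funext (fourierCoeffOn_exp_neg_I_mul hΩ0 t)
  have hParseval := hasSum_prod_fourierCoeffOn hab hgL2 hXL2
  simp only [hXcoeff, hgcoeff, conj_ofReal, mul_comm _ (y _)] at hParseval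
  refine ⟨?_, ?_⟩
  · simpa [hXcoeff, hgcoeff] using summable_norm_mul_of_summable_sq
      (hasSum_sq_fourierCoeffOn hab hXL2).summable (hasSum_sq_fourierCoeffOn hab hgL2).summable
  have hkernel : ∀ ω : ℝ, X ω * cexp (I * ω * t) = conj (g ω) * X ω := fun ω => by
    simp [g, ← Complex.exp_conj, mul_comm]
  rw [invZ, setIntegral_Ioc_neg_eq_intervalIntegral_of_eq_zero hΩ0.le hΩπ.le
    fun ω hω => by rw [hXsupp ω hω, zero_mul]]
  simp only [hkernel]
  rw [hParseval.tsum_eq, Complex.real_smul]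
  have hΩC : (Ω : ℂ) ≠ 0 := ofReal_ne_zero.2 hΩ0.ne'
  push_cast
  field_simp
  ring

/-- for `Ω ∈ (0,π)` and `y ∈ ℓ₂(ℤ)`, let `X̂ ∈ L²` of the circle be given by
`X̂(e^{iω}) = ∑_{k∈ℤ} y_k e^{ikωπ/Ω}` for `|ω| ≤ Ω` and `0` for `Ω < |ω| ≤ π` (characterized here
by vanishing off `[−Ω,Ω]` and having coefficients `(1/2Ω)∫_{−Ω}^{Ω} X̂(ω) e^{−ikωπ/Ω} dω = y_k`
in the orthogonal basis `{e^{ikωπ/Ω}}` of `L²(−Ω,Ω)`). Then for every `t ∈ ℤ` the inverse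
Z-transform satisfies `x̂(t) = (Ω/π) ∑_{k∈ℤ} y_k sinc(kπ + Ωt)`, the series converging
absolutely. -/
theorem stmt_16 (Ω : ℝ) (hΩ : Ω ∈ Set.Ioo 0 π) (y : ℤ → ℂ) (hy : MemL2 y)
    (X : ℝ → ℂ)
    (hXLp : MemLp X 2 (volume.restrict (Set.Ioc (-π) π)))
    (hXsupp : ∀ ω : ℝ, Ω < |ω| → X ω = 0)
    (hXcoef : ∀ k : ℤ,
      ((1 / (2 * Ω) : ℝ) : ℂ) *
        ∫ ω in Set.Ioc (-Ω) Ω, X ω * Complex.exp (-Complex.I * (k : ℂ) * ((ω * π / Ω : ℝ) : ℂ))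
      = y k) :
    ∀ t : ℤ,
      Summable (fun k : ℤ => ‖y k * ((_root_.sinc ((k : ℝ) * π + Ω * (t : ℝ)) : ℝ) : ℂ)‖) ∧
      invZ X t = ((Ω / π : ℝ) : ℂ) *
        ∑' k : ℤ, y k * ((_root_.sinc ((k : ℝ) * π + Ω * (t : ℝ)) : ℝ) : ℂ) :=
  stmt_16_general Ω hΩ y X hXLp hXsupp hXcoef
end
end

section
/- For every I ∈ J with mes(I) = 2Ω for some Ω ∈ (0,π), the set ℓ₂^{−,LBL}(I) is a proper subset of ℓ₂⁻: there exists x ∈ ℓ₂⁻ that is not the trace on {t ≤ 0} of any band-limited sequence in ℓ₂^{BL}(I). -/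
open MeasureTheory Complex Real Set Filter

noncomputable section

/-!
Let `b = mid + π` be the point antipodal to the centre of the arc and `x(t) = e^{ibt} / (1 - t)`,
which is in `ℓ₂⁻`. Suppose `x(t) = (1/2π) ∫ X(ω) e^{iωt} dω` for `t ≤ 0`, with `X` supported on
the arc. For `c = r e^{ib}`, `0 ≤ r < 1`, the Abel means `∑_{s ≥ 0} c^s x(-s) = ∑ r^s / (s + 1)`
are at least `-log (1 - r)`, hence unbounded as `r → 1`. But summing the geometric series under
the integral gives `∑ c^s x(-s) = (1/2π) ∫ X(ω) (1 - c e^{-iω})⁻¹ dω`, and on the arc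
`Re (1 - c e^{-iω}) = 1 + r cos (ω - mid) ≥ (1 + cos Ω) / 2 > 0`, so these means are bounded by a
multiple of `∫ ‖X‖`.
-/

theorem tsum_integral_mul_pow {α : Type*} [MeasurableSpace α] {μ : Measure α} {X g : α → ℂ}
    (hX : Integrable X μ) (hg : AEStronglyMeasurable g μ) {q : ℝ} (hq₀ : 0 ≤ q) (hq : q < 1)
    (hgq : ∀ ω, ‖g ω‖ ≤ q) :
    ∑' s : ℕ, ∫ ω, X ω * g ω ^ s ∂μ = ∫ ω, X ω * (1 - g ω)⁻¹ ∂μ := by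
  have hint (s : ℕ) : Integrable (fun ω => X ω * g ω ^ s) μ :=
    hX.mul_bdd (hg.pow s) (.of_forall fun ω => by
      rw [norm_pow]; exact pow_le_pow_left₀ (norm_nonneg _) (hgq ω) s)
  have hsum : Summable fun s : ℕ => ∫ ω, ‖X ω * g ω ^ s‖ ∂μ := by
    refine .of_nonneg_of_le (fun s => integral_nonneg fun ω => norm_nonneg _) (fun s => ?_)
      ((summable_geometric_of_lt_one hq₀ hq).mul_right (∫ ω, ‖X ω‖ ∂μ))
    rw [← integral_const_mul]
    refine integral_mono (hint s).norm (hX.norm.const_mul _) fun ω => ?_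
    rw [norm_mul, norm_pow, mul_comm]
    exact mul_le_mul_of_nonneg_right (pow_le_pow_left₀ (norm_nonneg _) (hgq ω) s) (norm_nonneg _)
  rw [integral_tsum_of_summable_integral_norm hint hsum]
  congr 1 with ω
  rw [tsum_mul_left, tsum_geometric_of_norm_lt_one ((hgq ω).trans_lt hq)]

theorem tsum_pow_mul_invZ_neg {X : ℝ → ℂ} (hX : IntegrableOn X (Ioc (-π) π)) {c : ℂ}
    (hc : ‖c‖ < 1) :
    ∑' s : ℕ, c ^ s * invZ X (-s) =
      ((1 / (2 * π) : ℝ) : ℂ) * ∫ ω in Ioc (-π) π, X ω * (1 - c * exp ((-ω : ℝ) * I))⁻¹ := by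
  have hterm (s : ℕ) : c ^ s * invZ X (-s) =
      ((1 / (2 * π) : ℝ) : ℂ) * ∫ ω in Ioc (-π) π, X ω * (c * exp ((-ω : ℝ) * I)) ^ s := by
    rw [invZ, mul_left_comm, ← integral_const_mul]
    refine congrArg _ (integral_congr_ae (.of_forall fun ω => ?_))
    simp only [mul_pow, ← Complex.exp_nat_mul]
    push_cast
    ring_nf
  have hnorm (ω : ℝ) : ‖c * exp ((-ω : ℝ) * I)‖ ≤ ‖c‖ := by
    rw [norm_mul, norm_exp_ofReal_mul_I, mul_one]
  rw [tsum_congr hterm, tsum_mul_left,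
    tsum_integral_mul_pow hX (by fun_prop) (norm_nonneg c) hc hnorm]

theorem Arc.cos_halfLen_le (A : Arc) {ω : ℝ} (hω : ω ∈ A.set) :
    Real.cos A.halfLen ≤ Real.cos (ω - A.mid) := by
  obtain ⟨-, k, hk⟩ := hω
  have hcos : Real.cos (ω - A.mid) = Real.cos |ω - A.mid + 2 * π * k| := by
    rw [Real.cos_abs, show ω - A.mid + 2 * π * k = ω - A.mid + k * (2 * π) by ring,
      Real.cos_add_int_mul_two_pi]
  rw [hcos]
  exact Real.cos_le_cos_of_nonneg_of_le_pi (abs_nonneg _) A.halfLen_lt.le hk.le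

theorem Arc.half_one_add_cos_le_norm (A : Arc) {ω r : ℝ} (hω : ω ∈ A.set) (hr₀ : 0 ≤ r)
    (hr : r ≤ 1) :
    (1 + Real.cos A.halfLen) / 2 ≤
      ‖1 - r * exp ((A.mid + π : ℝ) * I) * exp ((-ω : ℝ) * I)‖ := by
  have hre : (1 - r * exp ((A.mid + π : ℝ) * I) * exp ((-ω : ℝ) * I)).re =
      1 + r * Real.cos (ω - A.mid) := by
    rw [mul_assoc, ← Complex.exp_add, ← add_mul, ← ofReal_add, sub_re, one_re, re_ofReal_mul,
      exp_ofReal_mul_I_re, show A.mid + π + -ω = π - (ω - A.mid) by ring, Real.cos_pi_sub]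
    ring
  have hcos := A.cos_halfLen_le hω
  refine le_trans ?_ (hre.symm.trans_le (re_le_norm _))
  -- `1 + r cos θ - (1 + cos Ω) / 2 = r (cos θ - cos Ω) + ((1 - cos Ω) (1 - r) + (1 + cos Ω) r) / 2`
  nlinarith [mul_nonneg hr₀ (sub_nonneg.2 hcos),
    mul_nonneg (sub_nonneg.2 (Real.cos_le_one A.halfLen)) (sub_nonneg.2 hr),
    mul_nonneg (neg_le_iff_add_nonneg'.1 (Real.neg_one_le_cos A.halfLen)) hr₀]

theorem Arc.exists_bound_tsum_pow_mul_invZ_neg (A : Arc) {X : ℝ → ℂ}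
    (hX : IntegrableOn X (Ioc (-π) π))
    (hXA : ∀ᵐ ω ∂volume.restrict (Ioc (-π) π), ω ∉ A.set → X ω = 0) :
    ∃ C : ℝ, ∀ r : ℝ, 0 ≤ r → r < 1 →
      ‖∑' s : ℕ, ((r : ℂ) * exp ((A.mid + π : ℝ) * I)) ^ s * invZ X (-s)‖ ≤ C := by
  set δ := (1 + Real.cos A.halfLen) / 2
  have hδ : 0 < δ := by
    have := Real.cos_lt_cos_of_nonneg_of_le_pi A.halfLen_pos.le le_rfl A.halfLen_lt
    rw [Real.cos_pi] at this
    exact half_pos (by linarith)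
  refine ⟨1 / (2 * π) * (δ⁻¹ * ∫ ω in Ioc (-π) π, ‖X ω‖), fun r hr₀ hr => ?_⟩
  have hc : ‖(r : ℂ) * exp ((A.mid + π : ℝ) * I)‖ < 1 := by
    rwa [norm_mul, norm_exp_ofReal_mul_I, mul_one, Complex.norm_real,
      Real.norm_of_nonneg hr₀]
  rw [tsum_pow_mul_invZ_neg hX hc, norm_mul, Complex.norm_real,
    Real.norm_of_nonneg (by positivity), ← integral_const_mul]
  gcongr
  refine norm_integral_le_of_norm_le (hX.norm.const_mul _) ?_
  filter_upwards [hXA] with ω hω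
  by_cases hωA : ω ∈ A.set
  · rw [norm_mul, norm_inv, mul_comm]
    gcongr
    exact A.half_one_add_cos_le_norm hωA hr₀ hr.le
  · simp [hω hωA]

theorem neg_log_one_sub_le_tsum_pow_div {r : ℝ} (hr₀ : 0 ≤ r) (hr : r < 1) :
    -Real.log (1 - r) ≤ ∑' s : ℕ, r ^ s / (s + 1) := by
  have hlog := Real.hasSum_pow_div_log_of_abs_lt_one (by rwa [abs_of_nonneg hr₀])
  have hsum : Summable fun s : ℕ => r ^ s / (s + 1) := by
    refine .of_nonneg_of_le (fun s => by positivity) (fun s => ?_)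
      (summable_geometric_of_lt_one hr₀ hr)
    exact div_le_self (by positivity) (by linarith [s.cast_nonneg (α := ℝ)])
  have hmul : HasSum (fun s : ℕ => r ^ (s + 1) / (s + 1)) (r * ∑' s : ℕ, r ^ s / (s + 1)) := by
    simpa only [pow_succ', mul_div_assoc] using hsum.hasSum.mul_left r
  rw [hlog.unique hmul]
  exact mul_le_of_le_one_left (tsum_nonneg fun s => by positivity) hr.le

def natEquivNonpos : ℕ ≃ {t : ℤ // t ≤ 0} where
  toFun n := ⟨-(n : ℤ), by omega⟩
  invFun t := (-t.1).toNat
  left_inv n := by simp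
  right_inv t := by ext; simp [Int.toNat_of_nonneg (neg_nonneg.mpr t.2)]

theorem coe_natEquivNonpos (s : ℕ) : (natEquivNonpos s : ℤ) = -s := rfl

def modulatedHarmonic (b : ℝ) : NegSeq :=
  fun t => exp ((b * t.1 : ℝ) * I) / (1 - t.1)

theorem norm_modulatedHarmonic_natEquivNonpos (b : ℝ) (s : ℕ) :
    ‖modulatedHarmonic b (natEquivNonpos s)‖ = 1 / (s + 1) := by
  have hden : (1 : ℂ) - (natEquivNonpos s).1 = ((s + 1 : ℝ) : ℂ) := by
    push_cast [coe_natEquivNonpos]; ring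
  rw [modulatedHarmonic, norm_div, norm_exp_ofReal_mul_I, hden, Complex.norm_real,
    Real.norm_of_nonneg (by positivity)]

theorem memL2Neg_modulatedHarmonic (b : ℝ) : MemL2Neg (modulatedHarmonic b) := by
  rw [MemL2Neg, ← natEquivNonpos.summable_iff]
  change Summable fun s : ℕ => ‖modulatedHarmonic b (natEquivNonpos s)‖ ^ 2
  simp only [norm_modulatedHarmonic_natEquivNonpos, div_pow, one_pow]
  exact_mod_cast (summable_nat_add_iff 1).mpr (Real.summable_one_div_nat_pow.mpr one_lt_two)

theorem pow_mul_modulatedHarmonic_natEquivNonpos (b r : ℝ) (s : ℕ) :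
    ((r : ℂ) * exp (b * I)) ^ s * modulatedHarmonic b (natEquivNonpos s) =
      ((r ^ s / (s + 1) : ℝ) : ℂ) := by
  have hphase : (s * (b * I) + (b * (-s : ℤ) : ℝ) * I : ℂ) = 0 := by
    push_cast; ring
  rw [modulatedHarmonic, coe_natEquivNonpos, mul_pow, ← Complex.exp_nat_mul, mul_assoc,
    ← mul_div_assoc, ← Complex.exp_add, hphase, Complex.exp_zero]
  push_cast
  ring

/-- for every `I ∈ J` (an arc of measure `2Ω`, `Ω ∈ (0,π)`), the set
`ℓ₂^{−,LBL}(I)` is a proper subset of `ℓ₂⁻`: some `x ∈ ℓ₂⁻` is not the trace on `{t ≤ 0}` of any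
band-limited sequence in `ℓ₂^{BL}(I)`. -/
theorem stmt_17 (I : Arc) :
    ∃ x : NegSeq, MemL2Neg x ∧ ¬ LBL I.set x := by
  refine ⟨modulatedHarmonic (I.mid + π), memL2Neg_modulatedHarmonic _, ?_⟩
  rintro ⟨xBL, ⟨-, X, hX, hXI, hXinv⟩, htrace⟩
  obtain ⟨C, hC⟩ := I.exists_bound_tsum_pow_mul_invZ_neg (hX.integrable (by norm_num)) hXI
  have hinvZ (s : ℕ) : invZ X (-s) = modulatedHarmonic (I.mid + π) (natEquivNonpos s) := by
    rw [← hXinv]; exact (htrace (natEquivNonpos s)).symm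
  have hC₀ : 0 ≤ C := (norm_nonneg _).trans (hC 0 le_rfl one_pos)
  set r := 1 - Real.exp (-(C + 1))
  have hr₀ : 0 ≤ r := sub_nonneg.2 (Real.exp_le_one_iff.2 (by linarith))
  have hr : r < 1 := sub_lt_self 1 (Real.exp_pos _)
  have hsum : ∑' s : ℕ, r ^ s / (s + 1) ≤ C := by
    have := hC r hr₀ hr
    simp only [hinvZ, pow_mul_modulatedHarmonic_natEquivNonpos] at this
    rwa [← Complex.ofReal_tsum, Complex.norm_real,
      Real.norm_of_nonneg (tsum_nonneg fun s => by positivity)] at this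
  have hlog : -Real.log (1 - r) = C + 1 := by simp [r]
  linarith [neg_log_one_sub_le_tsum_pow_div hr₀ hr]
end
end
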